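/- Let m > 0 and let φ̃, ψ̃ : ℝ³ → ℂ be Schwartz functions. Then for every t ∈ ℝ: KG_t(φ^{+1}, ψ^{−1}) = 0; i.e., positive-frequency and negative-frequency solutions of the Klein–Gordon equation are mutually orthogonal with respect to the Klein–Gordon pairing at every time. -/

import Mathlib

open MeasureTheory

noncomputable section

/-- Relativistic energy `ε_p = √(‖p‖² + m²)`. -/
def relEnergy (m : ℝ) (p : EuclideanSpace ℝ (Fin 3)) : ℝ :=
  Real.sqrt (‖p‖ ^ 2 + m ^ 2)

/-- The `σ`-frequency solution of the Klein–Gordon equation with momentum-space profile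
`ψ̃`:  `ψ^σ(t,x) = (2π)^{−3/2} ∫ (2ε_p)⁻¹ e^{i(x·p − σ t ε_p)} ψ̃(p) dp`. -/
def kgSolution (m σ : ℝ) (ψ : SchwartzMap (EuclideanSpace ℝ (Fin 3)) ℂ)
    (t : ℝ) (x : EuclideanSpace ℝ (Fin 3)) : ℂ :=
  (((2 * Real.pi) ^ (-(3 : ℝ) / 2) : ℝ) : ℂ) *
    ∫ p : EuclideanSpace ℝ (Fin 3),
      ((2 * relEnergy m p : ℝ) : ℂ)⁻¹ *
        Complex.exp (Complex.I *
          (((inner ℝ x p : ℝ) : ℂ) - (σ : ℂ) * (t : ℂ) * ((relEnergy m p : ℝ) : ℂ))) *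
        ψ p

/-- The Klein–Gordon pairing at time `t`:
`KG_t(φ,ψ) = i ∫ [conj(φ(t,x))·∂_tψ(t,x) − conj(∂_tφ(t,x))·ψ(t,x)] dx`. -/
def kgPairing (φ ψ : ℝ → EuclideanSpace ℝ (Fin 3) → ℂ) (t : ℝ) : ℂ :=
  Complex.I * ∫ x : EuclideanSpace ℝ (Fin 3),
    (starRingEnd ℂ (φ t x) * deriv (fun t' => ψ t' x) t -
      starRingEnd ℂ (deriv (fun t' => φ t' x) t) * ψ t x)

/-! On the Fourier side, `ψ^σ(t)` is the inverse Fourier transform of the Schwartz profile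
`F = (2π)^{-3/2} (2ε)⁻¹ e^{-iσtε} ψ̃`, and `∂ₜψ^σ(t)` that of `-iσε F`; the rescaling `x ↦ x / 2π`
comes from the kernel `e^{2πi⟪v, w⟫}` of Mathlib's `𝓕⁻`. For `φ^σ` and `ψ^{-σ}` with profiles `F`
and `G`, Plancherel turns `KG_t` into a multiple of
`∫ conj F · (iσε G) − conj (−iσε F) · G = ∫ (iσε − iσε) conj F · G = 0`, as `ε` is real. -/

open Complex Real FourierTransform SchwartzMap
open scoped RealInnerProductSpace ComplexConjugate

theorem hasDerivAt_cexp_ofReal_mul_I (θ : ℝ) :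
    HasDerivAt (fun θ : ℝ => cexp (θ * I)) (I * cexp (θ * I)) θ := by
  simpa [mul_comm] using ((hasDerivAt_id θ).ofReal_comp.mul_const I).cexp

theorem iteratedDeriv_cexp_ofReal_mul_I (n : ℕ) :
    iteratedDeriv n (fun θ : ℝ => cexp (θ * I)) = fun θ : ℝ => I ^ n * cexp (θ * I) := by
  induction n with
  | zero => simp
  | succ n ih =>
    ext θ
    rw [iteratedDeriv_succ, ih, ((hasDerivAt_cexp_ofReal_mul_I θ).const_mul _).deriv, pow_succ,
      mul_assoc]

theorem hasTemperateGrowth_cexp_ofReal_mul_I :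
    (fun θ : ℝ => cexp (θ * I)).HasTemperateGrowth := by
  refine ⟨(ofRealCLM.contDiff.mul contDiff_const).cexp, fun n => ⟨0, 1, fun θ => ?_⟩⟩
  simp [norm_iteratedFDeriv_eq_norm_iteratedDeriv, iteratedDeriv_cexp_ofReal_mul_I]

theorem hasDerivAt_integral_cexp_mul {α : Type*} [MeasurableSpace α] {μ : Measure α}
    {ω : α → ℝ} {f : α → ℂ} (hω : AEStronglyMeasurable ω μ) (hf : Integrable f μ)
    (hωf : Integrable (fun a => ω a * f a) μ) (t : ℝ) :
    HasDerivAt (fun t => ∫ a, cexp (↑(-(t * ω a)) * I) * f a ∂μ)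
      (∫ a, -(I * ω a) * cexp (↑(-(t * ω a)) * I) * f a ∂μ) t := by
  have hmode (s : ℝ) (a : α) : HasDerivAt (fun s : ℝ => cexp (↑(-(s * ω a)) * I) * f a)
      (-(I * ω a) * cexp (↑(-(s * ω a)) * I) * f a) s := by
    refine (((hasDerivAt_cexp_ofReal_mul_I _).scomp s
      (hasDerivAt_mul_const (ω a)).fun_neg).mul_const (f a)).congr_deriv ?_
    rw [real_smul, ofReal_neg]
    ring
  have hmeas (g : ℝ → ℂ) (hg : Continuous g) : AEStronglyMeasurable (fun a => g (ω a) * f a) μ :=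
    (hg.comp_aestronglyMeasurable hω).mul hf.aestronglyMeasurable
  refine (hasDerivAt_integral_of_dominated_loc_of_deriv_le (bound := fun a => ‖ω a * f a‖)
    Filter.univ_mem (.of_forall fun s => hmeas (fun θ => cexp (↑(-(s * θ)) * I)) (by fun_prop)) ?_
    (hmeas (fun θ => -(I * θ) * cexp (↑(-(t * θ)) * I)) (by fun_prop))
    (.of_forall fun a s _ => ?_) hωf.norm (.of_forall fun a s _ => hmode s a)).2
  · exact hf.bdd_mul (c := 1) ((by fun_prop : Continuous fun θ : ℝ => cexp (↑(-(t * θ)) * I))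
      |>.comp_aestronglyMeasurable hω) (.of_forall fun a => (norm_exp_ofReal_mul_I _).le)
  · simp [norm_exp]

section InnerProductSpace

variable {V : Type*} [NormedAddCommGroup V] [InnerProductSpace ℝ V]

theorem hasTemperateGrowth_norm_sq_add_sq_rpow {m : ℝ} (hm : m ≠ 0) (r : ℝ) :
    (fun p : V => (‖p‖ ^ 2 + m ^ 2) ^ r).HasTemperateGrowth := by
  have h : (fun p : V => (‖p‖ ^ 2 + m ^ 2) ^ r)
      = fun p => (m ^ 2) ^ r * (1 + ‖m⁻¹ • p‖ ^ 2) ^ r := by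
    ext p
    rw [← Real.mul_rpow (by positivity) (by positivity), norm_smul, norm_inv, Real.norm_eq_abs,
      mul_pow, inv_pow, sq_abs]
    congr 1
    field_simp
    ring
  rw [h]
  exact (Function.HasTemperateGrowth.const _).fun_mul
    ((Function.hasTemperateGrowth_one_add_norm_sq_rpow V r).comp
      (m⁻¹ • ContinuousLinearMap.id ℝ V).hasTemperateGrowth)

variable [FiniteDimensional ℝ V] [MeasurableSpace V] [BorelSpace V]

theorem Function.HasTemperateGrowth.integrable_mul {g : V → ℂ} (hg : g.HasTemperateGrowth)
    (f : 𝓢(V, ℂ)) : Integrable (fun p => g p * f p) := by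
  simpa [smulLeftCLM_apply hg] using (smulLeftCLM ℂ g f).integrable (μ := volume)

theorem integrable_conj_mul (f g : 𝓢(V, ℂ)) : Integrable (fun x => conj (f x) * g x) := by
  refine g.integrable.bdd_mul (c := SchwartzMap.seminorm ℝ 0 0 f) (by fun_prop)
    (.of_forall fun x => ?_)
  simpa using norm_le_seminorm ℝ f x

theorem fourierInv_inv_two_pi_smul (f : V → ℂ) (x : V) :
    𝓕⁻ f ((2 * π)⁻¹ • x) = ∫ p, cexp (⟪x, p⟫ * I) * f p := by
  simp_rw [Real.fourierInv_eq', inner_smul_right, real_inner_comm x, smul_eq_mul]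
  congr! 5
  field_simp

theorem integral_conj_fourierInv_mul (f g : 𝓢(V, ℂ)) :
    ∫ x, conj (𝓕⁻ f x) * 𝓕⁻ g x = ∫ p, conj (f p) * g p := by
  simpa [mul_comm] using (integral_inner_fourier_fourier (𝓕⁻ f) (𝓕⁻ g)).symm

theorem integral_conj_fourierInv_mul_comp_smul (f g : 𝓢(V, ℂ)) (R : ℝ) :
    ∫ x, conj (𝓕⁻ f (R • x)) * 𝓕⁻ g (R • x)
      = |(R ^ Module.finrank ℝ V)⁻¹| • ∫ p, conj (f p) * g p := by
  rw [Measure.integral_comp_smul volume (fun x => conj (𝓕⁻ f x) * 𝓕⁻ g x),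
    integral_conj_fourierInv_mul]

end InnerProductSpace

local notation "E3" => EuclideanSpace ℝ (Fin 3)

section KleinGordon

variable {m : ℝ}

theorem hasTemperateGrowth_relEnergy (hm : m ≠ 0) : (relEnergy m).HasTemperateGrowth := by
  have h : relEnergy m = fun p => (‖p‖ ^ 2 + m ^ 2) ^ (1 / 2 : ℝ) :=
    funext fun p => Real.sqrt_eq_rpow _
  exact h ▸ hasTemperateGrowth_norm_sq_add_sq_rpow hm _

theorem hasTemperateGrowth_inv_relEnergy (hm : m ≠ 0) :
    (fun p => (relEnergy m p)⁻¹).HasTemperateGrowth := by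
  have h : (fun p => (relEnergy m p)⁻¹) = fun p => (‖p‖ ^ 2 + m ^ 2) ^ (-(1 / 2) : ℝ) :=
    funext fun p => by rw [Real.rpow_neg (by positivity), ← Real.sqrt_eq_rpow, relEnergy]
  exact h ▸ hasTemperateGrowth_norm_sq_add_sq_rpow hm _

theorem hasTemperateGrowth_const_mul_relEnergy (hm : m ≠ 0) (σ : ℝ) :
    (fun p => σ * relEnergy m p).HasTemperateGrowth :=
  (Function.HasTemperateGrowth.const σ).fun_mul (hasTemperateGrowth_relEnergy hm)

def kgMultiplier (m σ t : ℝ) (p : E3) : ℂ :=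
  ((2 * π) ^ (-(3 : ℝ) / 2) / 2 * (relEnergy m p)⁻¹ : ℝ) *
    cexp (↑(-(t * (σ * relEnergy m p))) * I)

theorem hasTemperateGrowth_kgMultiplier (hm : m ≠ 0) (σ t : ℝ) :
    (kgMultiplier m σ t).HasTemperateGrowth :=
  (ofRealCLM.hasTemperateGrowth.comp
      ((Function.HasTemperateGrowth.const _).fun_mul (hasTemperateGrowth_inv_relEnergy hm))).fun_mul
    (hasTemperateGrowth_cexp_ofReal_mul_I.comp ((Function.HasTemperateGrowth.const _).fun_mul
      (hasTemperateGrowth_const_mul_relEnergy hm σ)).fun_neg)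

def kgProfile (m σ t : ℝ) (ψ : 𝓢(E3, ℂ)) : 𝓢(E3, ℂ) :=
  smulLeftCLM ℂ (kgMultiplier m σ t) ψ

def kgDerivProfile (m σ t : ℝ) (ψ : 𝓢(E3, ℂ)) : 𝓢(E3, ℂ) :=
  smulLeftCLM ℂ (fun p => -(I * ↑(σ * relEnergy m p))) (kgProfile m σ t ψ)

theorem kgProfile_apply (hm : m ≠ 0) (σ t : ℝ) (ψ : 𝓢(E3, ℂ)) (p : E3) :
    kgProfile m σ t ψ p = kgMultiplier m σ t p * ψ p := by
  simp [kgProfile, hasTemperateGrowth_kgMultiplier hm]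

theorem kgDerivProfile_apply (hm : m ≠ 0) (σ t : ℝ) (ψ : 𝓢(E3, ℂ)) (p : E3) :
    kgDerivProfile m σ t ψ p = -(I * ↑(σ * relEnergy m p)) * kgProfile m σ t ψ p := by
  have h : (fun p => -(I * ↑(σ * relEnergy m p))).HasTemperateGrowth :=
    ((Function.HasTemperateGrowth.const I).fun_mul
      (ofRealCLM.hasTemperateGrowth.comp (hasTemperateGrowth_const_mul_relEnergy hm σ))).fun_neg
  rw [kgDerivProfile, smulLeftCLM_apply_apply h, smul_eq_mul]

theorem kgSolution_eq_fourierInv (hm : m ≠ 0) (σ : ℝ) (ψ : 𝓢(E3, ℂ)) (t : ℝ) (x : E3) :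
    kgSolution m σ ψ t x = 𝓕⁻ (kgProfile m σ t ψ) ((2 * π)⁻¹ • x) := by
  rw [fourierInv_coe, fourierInv_inv_two_pi_smul, kgSolution, ← integral_const_mul]
  congr 1 with p
  have h : cexp (I * (⟪x, p⟫ - σ * t * relEnergy m p))
      = cexp (⟪x, p⟫ * I) * cexp (↑(-(t * (σ * relEnergy m p))) * I) := by
    rw [← Complex.exp_add]
    congr 1
    push_cast
    ring
  rw [kgProfile_apply hm, kgMultiplier, h]
  push_cast
  ring

theorem deriv_kgSolution (hm : m ≠ 0) (σ : ℝ) (ψ : 𝓢(E3, ℂ)) (t : ℝ) (x : E3) :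
    deriv (fun t' => kgSolution m σ ψ t' x) t = 𝓕⁻ (kgDerivProfile m σ t ψ) ((2 * π)⁻¹ • x) := by
  set g : E3 → ℂ := fun p =>
    cexp (⟪x, p⟫ * I) * ((2 * π) ^ (-(3 : ℝ) / 2) / 2 * (relEnergy m p)⁻¹ : ℝ)
  have hg : g.HasTemperateGrowth :=
    (hasTemperateGrowth_cexp_ofReal_mul_I.comp (Function.hasTemperateGrowth_inner_right x)).fun_mul
      (ofRealCLM.hasTemperateGrowth.comp
        ((Function.HasTemperateGrowth.const _).fun_mul (hasTemperateGrowth_inv_relEnergy hm)))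
  have hωg : Integrable (fun p => ↑(σ * relEnergy m p) * (g p * ψ p)) := by
    simpa only [mul_assoc, Function.comp_apply, ofRealCLM_apply] using
      ((ofRealCLM.hasTemperateGrowth.comp
        (hasTemperateGrowth_const_mul_relEnergy hm σ)).fun_mul hg).integrable_mul ψ
  have hsol : (fun t' => kgSolution m σ ψ t' x)
      = fun t' => ∫ p, cexp (↑(-(t' * (σ * relEnergy m p))) * I) * (g p * ψ p) := by
    ext t'
    rw [kgSolution_eq_fourierInv hm, fourierInv_coe, fourierInv_inv_two_pi_smul]
    congr 1 with p
    rw [kgProfile_apply hm, kgMultiplier]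
    ring
  have hderiv := hasDerivAt_integral_cexp_mul
    (hasTemperateGrowth_const_mul_relEnergy hm σ).1.continuous.aestronglyMeasurable
    (hg.integrable_mul ψ) hωg t
  rw [hsol, hderiv.deriv, fourierInv_coe, fourierInv_inv_two_pi_smul]
  congr 1 with p
  rw [kgDerivProfile_apply hm, kgProfile_apply hm, kgMultiplier]
  ring

theorem conj_kgProfile_mul_kgDerivProfile_neg (hm : m ≠ 0) (σ t : ℝ) (φ ψ : 𝓢(E3, ℂ)) (p : E3) :
    conj (kgProfile m σ t φ p) * kgDerivProfile m (-σ) t ψ p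
      = conj (kgDerivProfile m σ t φ p) * kgProfile m (-σ) t ψ p := by
  simp only [kgDerivProfile_apply hm, map_mul, map_neg, conj_I, conj_ofReal]
  push_cast
  ring

end KleinGordon

/-- Positive-frequency and negative-frequency solutions of the Klein–Gordon equation are
mutually orthogonal with respect to the Klein–Gordon pairing at every time. -/
theorem kgPairing_opposite_frequency_orthogonal
    (m : ℝ) (hm : 0 < m)
    (φt ψt : SchwartzMap (EuclideanSpace ℝ (Fin 3)) ℂ) :
    ∀ t : ℝ, kgPairing (kgSolution m 1 φt) (kgSolution m (-1) ψt) t = 0 := by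
  intro t
  have h2π : (2 * π)⁻¹ ≠ 0 := by positivity
  simp only [kgPairing, deriv_kgSolution hm.ne']
  simp only [kgSolution_eq_fourierInv hm.ne']
  rw [integral_sub ((integrable_conj_mul _ _).comp_smul h2π)
      ((integrable_conj_mul _ _).comp_smul h2π),
    integral_conj_fourierInv_mul_comp_smul, integral_conj_fourierInv_mul_comp_smul]
  simp_rw [conj_kgProfile_mul_kgDerivProfile_neg hm.ne', sub_self, mul_zero]

end
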